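/- Let Bⁿ ⊂ ℝⁿ be the open unit ball and define the Funk metric F(x,y) = (√(‖y‖² − (‖x‖²‖y‖² − ⟨x,y⟩²)) + ⟨x,y⟩) / (1 − ‖x‖²) for x ∈ Bⁿ, y ∈ ℝⁿ∖{0}. Then F satisfies Rapcsák's equations ∑_k (∂²F/∂x^k∂y^l) y^k = ∂F/∂x^l for every l (F is projective), and its projective factor P = (∑_m (∂F/∂x^m) y^m)/(2F) satisfies ∂P/∂x^k = P·∂P/∂y^k + (1/4)·F·∂F/∂y^k for every k; i.e., F has constant flag curvature K = −1/4. -/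

import Mathlib

open scoped RealInnerProductSpace BigOperators

noncomputable section

abbrev E (n : ℕ) := EuclideanSpace ℝ (Fin n)

/-- Partial derivative of `F(x,y)` in the direction `∂/∂xⁱ`. -/
def pdx {n : ℕ} (F : E n → E n → ℝ) (i : Fin n) (x y : E n) : ℝ :=
  deriv (fun t : ℝ => F (x + t • EuclideanSpace.single i (1 : ℝ)) y) 0

/-- Partial derivative of `F(x,y)` in the direction `∂/∂yⁱ`. -/
def pdy {n : ℕ} (F : E n → E n → ℝ) (i : Fin n) (x y : E n) : ℝ :=
  deriv (fun t : ℝ => F x (y + t • EuclideanSpace.single i (1 : ℝ))) 0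

/-- The projective factor `P = (∑_m F_{x^m} y^m)/(2F)`. -/
def projFactor {n : ℕ} (F : E n → E n → ℝ) (x y : E n) : ℝ :=
  (∑ m, pdx F m x y * y m) / (2 * F x y)
/-- The Funk metric on the unit ball. -/
def Funk {n : ℕ} (x y : E n) : ℝ :=
  (Real.sqrt (‖y‖ ^ 2 - (‖x‖ ^ 2 * ‖y‖ ^ 2 - ⟪x, y⟫ ^ 2)) + ⟪x, y⟫) / (1 - ‖x‖ ^ 2)

/-!
Write `Q = √(⟪x, y⟫² + (1 - ‖x‖²)‖y‖²)`, so that `F = (Q + ⟪x, y⟫) / (1 - ‖x‖²)`. The derivative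
of `F` along any line `(x + t u, y + t v)` is `⟪F x + y, F u + v⟫ / Q`; hence
`F_y = (F x + y) / Q` and `F_x = F · F_y` (Okada's relation). Since `⟪F x + y, y⟫ = F Q`, the
derivative of `F` along `x + t y` is `F²`, so `P = F / 2` and the curvature equation is
`F_x = F · F_y` again. The left side of Rapcsák's equation is the derivative of `F_y` along
`x + t y`; `Q` is constant on that line, so it equals `(F² x + F y) / Q = F_x`.
-/

open Filter Topology

section

variable {n : ℕ}

lemma sum_pdx_mul_eq_lineDeriv {G : E n → E n → ℝ} {x y : E n} (v : E n)
    (hG : DifferentiableAt ℝ (fun x' => G x' y) x) :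
    ∑ k, pdx G k x y * v k = lineDeriv ℝ (fun x' => G x' y) x v := by
  have hpdx (k : Fin n) :
      pdx G k x y = fderiv ℝ (fun x' => G x' y) x (EuclideanSpace.single k 1) :=
    hG.lineDeriv_eq_fderiv
  rw [hG.lineDeriv_eq_fderiv]
  conv_rhs => rw [← (EuclideanSpace.basisFun (Fin n) ℝ).sum_repr v]
  simp [hpdx, mul_comm]

lemma eventually_line_of_nhds {p : E n → Prop} {x : E n} (h : ∀ᶠ x' in 𝓝 x, p x') (v : E n) :
    ∀ᶠ t : ℝ in 𝓝 0, p (x + t • v) := by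
  have hline : Continuous (fun t : ℝ => x + t • v) := by fun_prop
  have : Tendsto (fun t : ℝ => x + t • v) (𝓝 0) (𝓝 x) := by simpa using hline.tendsto 0
  exact this.eventually h

lemma pdx_congr {G H : E n → E n → ℝ} {x y : E n} (h : ∀ᶠ x' in 𝓝 x, G x' y = H x' y)
    (k : Fin n) : pdx G k x y = pdx H k x y :=
  Filter.EventuallyEq.deriv_eq (eventually_line_of_nhds h _)

lemma pdy_congr {G H : E n → E n → ℝ} {x y : E n} (h : ∀ᶠ y' in 𝓝 y, G x y' = H x y')
    (k : Fin n) : pdy G k x y = pdy H k x y :=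
  Filter.EventuallyEq.deriv_eq (eventually_line_of_nhds h _)

def funkDisc (x y : E n) : ℝ := ⟪x, y⟫ ^ 2 + (1 - ‖x‖ ^ 2) * ‖y‖ ^ 2

lemma funk_eq (x y : E n) : Funk x y = (√(funkDisc x y) + ⟪x, y⟫) / (1 - ‖x‖ ^ 2) := by
  rw [Funk, funkDisc]
  ring_nf

lemma funkDisc_add_smul_self (x y : E n) (t : ℝ) : funkDisc (x + t • y) y = funkDisc x y := by
  simp only [funkDisc, inner_add_left, real_inner_smul_left, norm_add_sq_real, norm_smul,
    real_inner_smul_right, real_inner_self_eq_norm_sq, Real.norm_eq_abs, mul_pow, sq_abs]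
  ring

section

variable {x y : E n}

lemma one_sub_norm_sq_pos (hx : ‖x‖ < 1) : 0 < 1 - ‖x‖ ^ 2 := by
  nlinarith [norm_nonneg x]

lemma funkDisc_pos (hx : ‖x‖ < 1) (hy : y ≠ 0) : 0 < funkDisc x y := by
  have := mul_pos (one_sub_norm_sq_pos hx) (pow_pos (norm_pos_iff.mpr hy) 2)
  unfold funkDisc
  positivity

lemma inner_funk_smul_add_self (hx : ‖x‖ < 1) (hy : y ≠ 0) :
    ⟪Funk x y • x + y, y⟫ = Funk x y * √(funkDisc x y) := by
  have h1a := (one_sub_norm_sq_pos hx).ne'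
  have hQ := Real.sq_sqrt (funkDisc_pos hx hy).le
  rw [inner_add_left, real_inner_smul_left, real_inner_self_eq_norm_sq, funk_eq]
  set Q := √(funkDisc x y)
  unfold funkDisc at hQ
  field_simp
  linear_combination -hQ

lemma hasDerivAt_funk_line (hx : ‖x‖ < 1) (hy : y ≠ 0) (u v : E n) :
    HasDerivAt (fun t : ℝ => Funk (x + t • u) (y + t • v))
      (⟪Funk x y • x + y, Funk x y • u + v⟫ / √(funkDisc x y)) 0 := by
  have hline : ∀ z w : E n, HasDerivAt (fun t : ℝ => z + t • w) w 0 := fun z w => by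
    simpa using ((hasDerivAt_id (0:ℝ)).smul_const w).const_add z
  have hs : HasDerivAt (fun t : ℝ => ⟪x + t • u, y + t • v⟫) (⟪x, v⟫ + ⟪u, y⟫) 0 := by
    simpa using (hline x u).inner ℝ (hline y v)
  have ha : HasDerivAt (fun t : ℝ => 1 - ‖x + t • u‖ ^ 2) (-(2 * ⟪x, u⟫)) 0 := by
    simpa using ((hline x u).norm_sq).const_sub 1
  have hb : HasDerivAt (fun t : ℝ => ‖y + t • v‖ ^ 2) (2 * ⟪y, v⟫) 0 := by
    simpa using (hline y v).norm_sq
  have hdisc : HasDerivAt (fun t : ℝ => funkDisc (x + t • u) (y + t • v))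
      (2 * ⟪x, y⟫ * (⟪x, v⟫ + ⟪u, y⟫) - 2 * ⟪x, u⟫ * ‖y‖ ^ 2 + (1 - ‖x‖ ^ 2) * (2 * ⟪y, v⟫)) 0 := by
    have := (hs.pow 2).add (ha.mul hb)
    simp only [zero_smul, add_zero] at this
    exact this.congr_deriv (by ring)
  have hF := ((hdisc.sqrt (by simpa using (funkDisc_pos hx hy).ne')).add hs).div ha
    (by simpa using (one_sub_norm_sq_pos hx).ne')
  simp only [zero_smul, add_zero, Pi.add_apply] at hF
  refine (hF.congr_of_eventuallyEq (Eventually.of_forall fun t => funk_eq _ _)).congr_deriv ?_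
  have h1a := (one_sub_norm_sq_pos hx).ne'
  have hQ := Real.sq_sqrt (funkDisc_pos hx hy).le
  have hQ0 := (Real.sqrt_pos.mpr (funkDisc_pos hx hy)).ne'
  simp only [inner_add_left, inner_add_right, real_inner_smul_left,
    real_inner_smul_right, real_inner_comm u y, funk_eq]
  set Q := √(funkDisc x y)
  unfold funkDisc at hQ
  field_simp
  linear_combination ⟪x, u⟫ * hQ

lemma pdy_funk (hx : ‖x‖ < 1) (hy : y ≠ 0) (l : Fin n) :
    pdy Funk l x y = (Funk x y * x l + y l) / √(funkDisc x y) := by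
  have := (hasDerivAt_funk_line hx hy 0 (EuclideanSpace.single l 1)).deriv
  simp only [smul_zero, add_zero, zero_add, inner_add_left,
    EuclideanSpace.inner_single_right, conj_trivial, one_mul] at this
  exact this

lemma pdx_funk_eq_mul_pdy (hx : ‖x‖ < 1) (hy : y ≠ 0) (k : Fin n) :
    pdx Funk k x y = Funk x y * pdy Funk k x y := by
  have := (hasDerivAt_funk_line hx hy (EuclideanSpace.single k 1) 0).deriv
  simp only [smul_zero, add_zero, inner_smul_right, EuclideanSpace.inner_single_right,
    conj_trivial, one_mul, PiLp.add_apply, PiLp.smul_apply, smul_eq_mul] at this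
  rw [pdx, this, pdy_funk hx hy]
  ring

lemma hasDerivAt_funk_add_smul_self (hx : ‖x‖ < 1) (hy : y ≠ 0) :
    HasDerivAt (fun t : ℝ => Funk (x + t • y) y) (Funk x y ^ 2) 0 := by
  have hQ0 := (Real.sqrt_pos.mpr (funkDisc_pos hx hy)).ne'
  have := hasDerivAt_funk_line hx hy y 0
  simp only [smul_zero, add_zero, real_inner_smul_right, inner_funk_smul_add_self hx hy] at this
  exact this.congr_deriv (by field_simp)

lemma differentiableAt_inner_left (y : E n) {x : E n} :
    DifferentiableAt ℝ (fun x' : E n => ⟪x', y⟫) x :=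
  differentiableAt_fun_id.inner ℝ (differentiableAt_const y)

lemma differentiableAt_sqrt_funkDisc_left (hx : ‖x‖ < 1) (hy : y ≠ 0) :
    DifferentiableAt ℝ (fun x' => √(funkDisc x' y)) x := by
  have hs := differentiableAt_inner_left y (x := x)
  have ha : DifferentiableAt ℝ (fun x' : E n => ‖x'‖ ^ 2) x := differentiableAt_fun_id.norm_sq ℝ
  have hd : DifferentiableAt ℝ (fun x' => funkDisc x' y) x := by unfold funkDisc; fun_prop
  exact hd.sqrt (funkDisc_pos hx hy).ne'

lemma differentiableAt_funk_left (hx : ‖x‖ < 1) (hy : y ≠ 0) :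
    DifferentiableAt ℝ (fun x' => Funk x' y) x := by
  have hQ := differentiableAt_sqrt_funkDisc_left hx hy
  have hs := differentiableAt_inner_left y (x := x)
  have ha : DifferentiableAt ℝ (fun x' : E n => ‖x'‖ ^ 2) x := differentiableAt_fun_id.norm_sq ℝ
  simp only [funk_eq]
  fun_prop (disch := exact (one_sub_norm_sq_pos hx).ne')

lemma sum_pdx_funk_mul (hx : ‖x‖ < 1) (hy : y ≠ 0) :
    ∑ m, pdx Funk m x y * y m = Funk x y ^ 2 := by
  rw [sum_pdx_mul_eq_lineDeriv y (differentiableAt_funk_left hx hy), lineDeriv]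
  exact (hasDerivAt_funk_add_smul_self hx hy).deriv

lemma funk_pos (hx : ‖x‖ < 1) (hy : y ≠ 0) : 0 < Funk x y := by
  have hab := mul_pos (one_sub_norm_sq_pos hx) (pow_pos (norm_pos_iff.mpr hy) 2)
  have hQs : -⟪x, y⟫ < √(funkDisc x y) :=
    Real.lt_sqrt_of_sq_lt (by rw [neg_sq, funkDisc]; linarith)
  rw [funk_eq]
  exact div_pos (by linarith) (one_sub_norm_sq_pos hx)

lemma projFactor_funk (hx : ‖x‖ < 1) (hy : y ≠ 0) : projFactor Funk x y = Funk x y / 2 := by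
  have hF := (funk_pos hx hy).ne'
  rw [projFactor, sum_pdx_funk_mul hx hy]
  field_simp

lemma pdx_projFactor_funk (hx : ‖x‖ < 1) (hy : y ≠ 0) (k : Fin n) :
    pdx (projFactor Funk) k x y = pdx Funk k x y / 2 := by
  have hball : ∀ᶠ x' in 𝓝 x, ‖x'‖ < 1 := (continuous_norm.tendsto x).eventually (gt_mem_nhds hx)
  rw [pdx_congr (H := fun x' y' => Funk x' y' / 2) (hball.mono fun x' hx' => projFactor_funk hx' hy)]
  exact deriv_div_const _

lemma pdy_projFactor_funk (hx : ‖x‖ < 1) (hy : y ≠ 0) (k : Fin n) :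
    pdy (projFactor Funk) k x y = pdy Funk k x y / 2 := by
  rw [pdy_congr (H := fun x' y' => Funk x' y' / 2)
    ((eventually_ne_nhds hy).mono fun y' hy' => projFactor_funk hx hy')]
  exact deriv_div_const _

lemma sum_pdx_pdy_funk_mul (hx : ‖x‖ < 1) (hy : y ≠ 0) (l : Fin n) :
    ∑ k, pdx (fun a b => pdy Funk l a b) k x y * y k = pdx Funk l x y := by
  have hball : ∀ᶠ x' in 𝓝 x, ‖x'‖ < 1 := (continuous_norm.tendsto x).eventually (gt_mem_nhds hx)
  have hloc : (fun x' => pdy Funk l x' y) =ᶠ[𝓝 x]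
      fun x' => (Funk x' y * x' l + y l) / √(funkDisc x' y) :=
    hball.mono fun x' hx' => pdy_funk hx' hy l
  have hdiff : DifferentiableAt ℝ (fun x' => pdy Funk l x' y) x := by
    have hF := differentiableAt_funk_left hx hy
    have hQ := differentiableAt_sqrt_funkDisc_left hx hy
    rw [hloc.differentiableAt_iff]
    fun_prop (disch := exact (Real.sqrt_pos.mpr (funkDisc_pos hx hy)).ne')
  have hline : (fun t : ℝ => pdy Funk l (x + t • y) y) =ᶠ[𝓝 0]
      fun t => (Funk (x + t • y) y * (x l + t * y l) + y l) / √(funkDisc x y) := by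
    filter_upwards [eventually_line_of_nhds hloc y] with t ht
    rw [ht, funkDisc_add_smul_self]
    simp
  have hderiv : HasDerivAt
      (fun t => (Funk (x + t • y) y * (x l + t * y l) + y l) / √(funkDisc x y))
      ((Funk x y ^ 2 * x l + Funk x y * y l) / √(funkDisc x y)) 0 := by
    have hxl : HasDerivAt (fun t : ℝ => x l + t * y l) (y l) 0 := by
      simpa using ((hasDerivAt_id (0:ℝ)).mul_const (y l)).const_add (x l)
    have := (((hasDerivAt_funk_add_smul_self hx hy).mul hxl).add_const (y l)).div_const
      (√(funkDisc x y))
    simp only [zero_smul, add_zero, zero_mul] at this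
    exact this.congr_deriv (by ring)
  rw [sum_pdx_mul_eq_lineDeriv y hdiff, lineDeriv, hline.deriv_eq, hderiv.deriv,
    pdx_funk_eq_mul_pdy hx hy, pdy_funk hx hy]
  ring

end

end

/-- The Funk metric is projective and has constant flag curvature `K = −1/4`. -/
theorem funk_projective_constant_curvature {n : ℕ} :
    (∀ x : E n, ‖x‖ < 1 → ∀ y : E n, y ≠ 0 → ∀ l : Fin n,
        (∑ k, pdx (fun a b => pdy Funk l a b) k x y * y k) = pdx Funk l x y) ∧
      (∀ x : E n, ‖x‖ < 1 → ∀ y : E n, y ≠ 0 → ∀ k : Fin n,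
        pdx (projFactor Funk) k x y =
          projFactor Funk x y * pdy (projFactor Funk) k x y
            + (1 / 4) * Funk x y * pdy Funk k x y) := by
  refine ⟨fun x hx y hy l => sum_pdx_pdy_funk_mul hx hy l, fun x hx y hy k => ?_⟩
  rw [pdx_projFactor_funk hx hy, pdy_projFactor_funk hx hy, projFactor_funk hx hy,
    pdx_funk_eq_mul_pdy hx hy]
  ring
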